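/- arXiv:1206.3350 — 4 statements merged into one kernel-verified Lean document; each statement's English description precedes it below -/
import Mathlib

section
/- For positive definite matrices B̃ and B̂ of the same size, Tr[(B̃ − B̂)(B̂⁻¹ − B̃⁻¹)] ≥ 0, with equality if and only if B̃ = B̂. -/
open Matrix
open scoped ComplexOrder

private lemma trace_conjTranspose_mul_self_re {n : ℕ} (A : Matrix (Fin n) (Fin n) ℂ) :
    ((Aᴴ * A).trace).re = ∑ i, ∑ j, Complex.normSq (A j i) := by
  simp only [Matrix.trace, Matrix.diag, Matrix.mul_apply, Matrix.conjTranspose_apply]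
  rw [Complex.re_sum]
  refine Finset.sum_congr rfl fun i _ => ?_
  rw [Complex.re_sum]
  refine Finset.sum_congr rfl fun j _ => ?_
  rw [Complex.star_def, ← Complex.normSq_eq_conj_mul_self, Complex.ofReal_re]

private lemma trace_conjTranspose_mul_self_re_nonneg {n : ℕ} (A : Matrix (Fin n) (Fin n) ℂ) :
    0 ≤ ((Aᴴ * A).trace).re := by
  rw [trace_conjTranspose_mul_self_re]
  exact Finset.sum_nonneg fun i _ => Finset.sum_nonneg fun j _ => Complex.normSq_nonneg _

private lemma trace_conjTranspose_mul_self_re_eq_zero {n : ℕ} (A : Matrix (Fin n) (Fin n) ℂ)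
    (h : ((Aᴴ * A).trace).re = 0) : A = 0 := by
  rw [trace_conjTranspose_mul_self_re] at h
  ext j i
  have h1 : ∀ i ∈ Finset.univ, (0:ℝ) ≤ ∑ j, Complex.normSq (A j i) :=
    fun i _ => Finset.sum_nonneg fun j _ => Complex.normSq_nonneg _
  have h2 := (Finset.sum_eq_zero_iff_of_nonneg h1).mp h i (Finset.mem_univ i)
  have h3 : ∀ j ∈ Finset.univ, (0:ℝ) ≤ Complex.normSq (A j i) :=
    fun j _ => Complex.normSq_nonneg _
  have h4 := (Finset.sum_eq_zero_iff_of_nonneg h3).mp h2 j (Finset.mem_univ j)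
  simpa using Complex.normSq_eq_zero.mp h4

/-- For positive definite `B̃`, `B̂`: `Tr[(B̃ − B̂)(B̂⁻¹ − B̃⁻¹)] ≥ 0` with equality iff `B̃ = B̂`. -/
theorem stmt_1 (n : ℕ) (Bt Bh : Matrix (Fin n) (Fin n) ℂ)
    (hBt : Bt.PosDef) (hBh : Bh.PosDef) :
    0 ≤ (((Bt - Bh) * (Bh⁻¹ - Bt⁻¹)).trace).re ∧
      ((((Bt - Bh) * (Bh⁻¹ - Bt⁻¹)).trace).re = 0 ↔ Bt = Bh) := by
  set D := Bt - Bh with hD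
  have hDh : Dᴴ = D := (hBt.1.sub hBh.1)
  have hBti : (Bt⁻¹).PosDef := hBt.inv
  have hBhi : (Bh⁻¹).PosDef := hBh.inv
  obtain ⟨S, hSh, hSS⟩ : ∃ S : Matrix (Fin n) (Fin n) ℂ, Sᴴ = S ∧ S * S = Bh⁻¹ :=
    by
      open scoped MatrixOrder in
      exact ⟨CFC.sqrt (Bh⁻¹), (CFC.sqrt_nonneg (Bh⁻¹)).posSemidef.1, CFC.sqrt_mul_sqrt_self (Bh⁻¹) hBhi.posSemidef.nonneg⟩
  obtain ⟨T, hTh, hTT⟩ : ∃ T : Matrix (Fin n) (Fin n) ℂ, Tᴴ = T ∧ T * T = Bt⁻¹ :=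
    by
      open scoped MatrixOrder in
      exact ⟨CFC.sqrt (Bt⁻¹), (CFC.sqrt_nonneg (Bt⁻¹)).posSemidef.1, CFC.sqrt_mul_sqrt_self (Bt⁻¹) hBti.posSemidef.nonneg⟩
  have hBtinv : Bt * Bt⁻¹ = 1 := Matrix.mul_nonsing_inv _ hBt.det_pos.ne'.isUnit
  have hBhinv : Bh⁻¹ * Bh = 1 := Matrix.nonsing_inv_mul _ hBh.det_pos.ne'.isUnit
  have hdiff : Bh⁻¹ - Bt⁻¹ = Bh⁻¹ * D * Bt⁻¹ := by
    rw [hD]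
    rw [Matrix.mul_sub, Matrix.sub_mul, Matrix.mul_assoc, hBtinv, Matrix.mul_one, hBhinv, one_mul]
  have e1 : (Bt - Bh) * (Bh⁻¹ - Bt⁻¹) = (D * (S * (S * (D * T)))) * T := by
    rw [hdiff, ← hD, ← hSS, ← hTT]
    simp only [Matrix.mul_assoc]
  have keytrace : (((Bt - Bh) * (Bh⁻¹ - Bt⁻¹)).trace) = ((S * D * T)ᴴ * (S * D * T)).trace := by
    rw [e1, Matrix.trace_mul_comm]
    congr 1
    simp only [Matrix.conjTranspose_mul, hSh, hTh, hDh, Matrix.mul_assoc]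
  have hSunit : IsUnit S.det := by
    have h : S.det * S.det = (Bh⁻¹).det := by rw [← Matrix.det_mul, hSS]
    exact isUnit_of_mul_isUnit_left (h ▸ hBhi.det_pos.ne'.isUnit)
  have hTunit : IsUnit T.det := by
    have h : T.det * T.det = (Bt⁻¹).det := by rw [← Matrix.det_mul, hTT]
    exact isUnit_of_mul_isUnit_left (h ▸ hBti.det_pos.ne'.isUnit)
  constructor
  · rw [keytrace]; exact trace_conjTranspose_mul_self_re_nonneg _
  · constructor
    · intro h
      rw [keytrace] at h
      have h0 : S * D * T = 0 := trace_conjTranspose_mul_self_re_eq_zero _ h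
      have hD0 : D = 0 := by
        have h1 := congrArg (fun M => S⁻¹ * M * T⁻¹) h0
        simpa [Matrix.mul_assoc, Matrix.mul_nonsing_inv _ hTunit,
          Matrix.nonsing_inv_mul_cancel_left _ _ hSunit] using h1
      exact sub_eq_zero.mp (hD ▸ hD0)
    · intro h
      simp [h]
end

section
/- Let u : 2^K → ℝ≥0 be monotone (u(S) ≤ u(K) for all S ⊆ K) and define the game v(S) = (|S|/|K|)·u(S) for proper subsets S ⊊ K and v(K) = u(K). Then for every balanced collection of weights (λ_S), Σ_{S⊆K} λ_S v(S) ≤ v(K), so the game v has a nonempty core. -/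
/-- Time-shared SIC high-SNR game: `v(S) = (|S|/|K|) u(S)` for proper `S`, `v(K) = u(K)`,
with `u` nonnegative and bounded by `u(K)`, is balanced. -/
theorem stmt_4 {K : Type*} [Fintype K] [DecidableEq K] [Nonempty K]
    (u : Finset K → ℝ) (hu0 : ∀ S, 0 ≤ u S) (humono : ∀ S, u S ≤ u Finset.univ)
    (v : Finset K → ℝ)
    (hv : ∀ S : Finset K, S ≠ Finset.univ →
      v S = ((S.card : ℝ) / (Fintype.card K : ℝ)) * u S)
    (hvK : v Finset.univ = u Finset.univ)
    (lam : Finset K → ℝ) (hlam0 : ∀ S, 0 ≤ lam S) (hlam1 : ∀ S, lam S ≤ 1)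
    (hbal : ∀ k : K, ∑ S ∈ Finset.univ.powerset.filter (fun S => k ∈ S), lam S = 1) :
    ∑ S ∈ Finset.univ.powerset.filter (fun S => S.Nonempty), lam S * v S
      ≤ v Finset.univ := by
  classical
  set n : ℝ := (Fintype.card K : ℝ) with hn
  have hnpos : (0:ℝ) < n := by
    rw [hn]; exact_mod_cast Fintype.card_pos
  set A := (Finset.univ.powerset.filter (fun S : Finset K => S.Nonempty)) with hA
  have hterm : ∀ S : Finset K, lam S * v S ≤ lam S * ((S.card : ℝ)/n * u Finset.univ) := by
    intro S
    apply mul_le_mul_of_nonneg_left _ (hlam0 S)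
    by_cases hS : S = Finset.univ
    · subst hS
      rw [hvK]
      have h1 : ((Finset.univ : Finset K).card : ℝ)/n = 1 := by
        rw [Finset.card_univ]
        field_simp
        exact hn.symm
      rw [h1, one_mul]
    · rw [hv S hS]
      have h1 : (0:ℝ) ≤ (S.card:ℝ)/n := by positivity
      exact mul_le_mul_of_nonneg_left (humono S) h1
  have hsum : ∑ S ∈ A, lam S * (S.card : ℝ) = n := by
    have key : ∀ S ∈ A, lam S * (S.card : ℝ) = ∑ k : K, if k ∈ S then lam S else 0 := by
      intro S _
      rw [Finset.sum_ite_mem, Finset.univ_inter, Finset.sum_const, nsmul_eq_mul, mul_comm]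
    calc ∑ S ∈ A, lam S * (S.card : ℝ)
        = ∑ S ∈ A, ∑ k : K, if k ∈ S then lam S else 0 := Finset.sum_congr rfl key
      _ = ∑ k : K, ∑ S ∈ A, if k ∈ S then lam S else 0 := Finset.sum_comm
      _ = ∑ k : K, (1:ℝ) := by
          refine Finset.sum_congr rfl fun k _ => ?_
          rw [← Finset.sum_filter]
          have hfil : A.filter (fun S => k ∈ S)
              = Finset.univ.powerset.filter (fun S => k ∈ S) := by
            rw [hA, Finset.filter_filter]
            refine Finset.filter_congr fun S _ => ?_
            simp only [and_iff_right_iff_imp]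
            intro hk
            exact ⟨k, hk⟩
          rw [hfil]
          exact hbal k
      _ = n := by simp [hn]
  rw [hvK]
  calc ∑ S ∈ A, lam S * v S
      ≤ ∑ S ∈ A, lam S * ((S.card:ℝ)/n * u Finset.univ) :=
        Finset.sum_le_sum (fun S _ => hterm S)
    _ = (∑ S ∈ A, lam S * (S.card:ℝ)) * (u Finset.univ / n) := by
        rw [Finset.sum_mul]
        refine Finset.sum_congr rfl fun S _ => ?_
        ring
    _ = n * (u Finset.univ / n) := by rw [hsum]
    _ = u Finset.univ := by field_simp
end

section
/- Balancedness of the low-SNR beamforming game: let p₁,...,p_n ≥ 0, σ : 2^K → ℝ≥0 with σ(S)² ≤ σ(K)² for every S ⊆ K, and define v(S) = σ(S)²·Σ_{i∈S} pᵢ. Then for any balanced weight collection (λ_S), Σ_S λ_S v(S) ≤ σ(K)²·Σ_{S} λ_S Σ_{i∈S} pᵢ = σ(K)²·Σᵢ pᵢ = v(K); hence the core of (K, v) is nonempty, and moreover the allocation xᵢ = σ(K)²·pᵢ lies in the core. -/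
/-- Balancedness of the low-SNR beamforming game `v(S) = σ(S)² ∑_{i∈S} pᵢ`, and core
membership of the allocation `xᵢ = σ(K)² pᵢ`. -/
theorem stmt_15 {K : Type*} [Fintype K] [DecidableEq K]
    (p : K → ℝ) (hp : ∀ i, 0 ≤ p i)
    (σ : Finset K → ℝ) (hσ : ∀ S, 0 ≤ σ S) (hσK : ∀ S, σ S ≤ σ Finset.univ) :
    (∀ lam : Finset K → ℝ, (∀ S, 0 ≤ lam S) → (∀ S, lam S ≤ 1) →
        (∀ k : K, ∑ S ∈ Finset.univ.powerset.filter (fun S => k ∈ S), lam S = 1) →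
        ∑ S ∈ Finset.univ.powerset.filter (fun S => S.Nonempty),
            lam S * (σ S ^ 2 * ∑ i ∈ S, p i)
          ≤ σ Finset.univ ^ 2 * ∑ i, p i) ∧
    ((∑ i, σ Finset.univ ^ 2 * p i) = σ Finset.univ ^ 2 * ∑ i, p i ∧
      ∀ S : Finset K, σ S ^ 2 * ∑ i ∈ S, p i ≤ ∑ i ∈ S, σ Finset.univ ^ 2 * p i) := by
  have hσ2 : ∀ S : Finset K, σ S ^ 2 ≤ σ Finset.univ ^ 2 := fun S =>
    pow_le_pow_left₀ (hσ S) (hσK S) 2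
  have hps : ∀ S : Finset K, 0 ≤ ∑ i ∈ S, p i := fun S =>
    Finset.sum_nonneg fun i _ => hp i
  refine ⟨?_, ?_, ?_⟩
  · intro lam hlam0 _ hbal
    calc
      ∑ S ∈ Finset.univ.powerset.filter (fun S => S.Nonempty),
          lam S * (σ S ^ 2 * ∑ i ∈ S, p i)
          ≤ ∑ S ∈ Finset.univ.powerset.filter (fun S => S.Nonempty),
            lam S * (σ Finset.univ ^ 2 * ∑ i ∈ S, p i) := by
            apply Finset.sum_le_sum
            intro S _
            exact mul_le_mul_of_nonneg_left
              (mul_le_mul_of_nonneg_right (hσ2 S) (hps S)) (hlam0 S)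
      _ ≤ ∑ S ∈ Finset.univ.powerset,
            lam S * (σ Finset.univ ^ 2 * ∑ i ∈ S, p i) := by
            apply Finset.sum_le_sum_of_subset_of_nonneg (Finset.filter_subset _ _)
            intro S _ _
            exact mul_nonneg (hlam0 S) (mul_nonneg (sq_nonneg _) (hps S))
      _ = σ Finset.univ ^ 2 * ∑ S ∈ Finset.univ.powerset, ∑ i ∈ S, lam S * p i := by
            rw [Finset.mul_sum]; apply Finset.sum_congr rfl
            intro S _; rw [← Finset.mul_sum]; ring
      _ = σ Finset.univ ^ 2 * ∑ i, p i := by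
            congr 1
            have : ∀ S ∈ Finset.univ.powerset, ∑ i ∈ S, lam S * p i
                = ∑ i : K, if i ∈ S then lam S * p i else 0 := by
              intro S _; rw [Finset.sum_ite_mem, Finset.univ_inter]
            rw [Finset.sum_congr rfl this, Finset.sum_comm]
            apply Finset.sum_congr rfl
            intro i _
            have : ∑ S ∈ Finset.univ.powerset, (if i ∈ S then lam S * p i else 0)
                = (∑ S ∈ Finset.univ.powerset.filter (fun S => i ∈ S), lam S) * p i := by
              rw [Finset.sum_filter, Finset.sum_mul]
              apply Finset.sum_congr rfl
              intro S _
              by_cases h : i ∈ S <;> simp [h]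
            rw [this, hbal i, one_mul]
  · rw [Finset.mul_sum]
  · intro S
    calc σ S ^ 2 * ∑ i ∈ S, p i ≤ σ Finset.univ ^ 2 * ∑ i ∈ S, p i :=
          mul_le_mul_of_nonneg_right (hσ2 S) (hps S)
      _ = ∑ i ∈ S, σ Finset.univ ^ 2 * p i := Finset.mul_sum _ _ _
end

section
/- Uniqueness of SUD aggregate at Nash equilibrium: if Q̃₁,...,Q̃_N and Q̂₁,...,Q̂_N are two Nash equilibria of the SUD game (each Q_n maximizes log det(N₀I + Σⱼ HⱼQⱼHⱼᴴ) − log det(N₀I + Σ_{j≠n} HⱼQⱼHⱼᴴ) over the feasible covariances of player n given the others), and the equilibrium conditions force Σₙ Cₙ = 0 where Cₙ = Tr[(HₙQ̃ₙHₙᴴ − HₙQ̂ₙHₙᴴ)((N₀I + ΣⱼHⱼQ̂ⱼHⱼᴴ)⁻¹ − (N₀I + ΣⱼHⱼQ̃ⱼHⱼᴴ)⁻¹)], then Σₙ HₙQ̃ₙHₙᴴ = Σₙ HₙQ̂ₙHₙᴴ. In particular: for PSD matrices Ãₙ = HₙQ̃ₙHₙᴴ, Âₙ = HₙQ̂ₙHₙᴴ,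 if Tr[(Σₙ(Ãₙ−Âₙ))((N₀I+ΣₙÂₙ)⁻¹ − (N₀I+ΣₙÃₙ)⁻¹)] = 0, then ΣₙÃₙ = ΣₙÂₙ. -/
open Matrix
open scoped ComplexOrder
open scoped MatrixOrder

lemma aux_trace_ctm_eq_zero {m k : ℕ} {A : Matrix (Fin k) (Fin m) ℂ}
    (h : (Aᴴ * A).trace = 0) : A = 0 := by
  have hdiag : ∀ i ∈ (Finset.univ : Finset (Fin m)), (0:ℂ) ≤ (Aᴴ * A) i i := by
    intro i _
    simpa [Matrix.mul_apply, Matrix.conjTranspose_apply, dotProduct] using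
      dotProduct_star_self_nonneg (fun j => A j i)
  have h0 : ∀ i ∈ (Finset.univ : Finset (Fin m)), (Aᴴ * A) i i = 0 :=
    (Finset.sum_eq_zero_iff_of_nonneg hdiag).mp h
  ext i j
  have := h0 j (Finset.mem_univ j)
  have hcol : dotProduct (star (fun l => A l j)) (fun l => A l j) = 0 := by
    simpa [Matrix.mul_apply, Matrix.conjTranspose_apply, dotProduct] using this
  have := dotProduct_star_self_eq_zero.mp hcol
  exact congrFun this i

lemma aux_psd_trace_zero {m : ℕ} {A : Matrix (Fin m) (Fin m) ℂ} (hA : A.PosSemidef)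
    (h : A.trace = 0) : A = 0 := by
  have hs : CFC.sqrt A * CFC.sqrt A = A := CFC.sqrt_mul_sqrt_self A (Matrix.nonneg_iff_posSemidef.mpr hA)
  have hH : (CFC.sqrt A)ᴴ = CFC.sqrt A := (Matrix.nonneg_iff_posSemidef.mp (CFC.sqrt_nonneg A)).1
  have h' : ((CFC.sqrt A)ᴴ * CFC.sqrt A).trace = 0 := by rw [hH, hs, h]
  have := aux_trace_ctm_eq_zero h'
  rw [← hs, this, Matrix.mul_zero]

/-- Uniqueness of the SUD aggregate received covariance at Nash equilibrium. -/
theorem stmt_17 (M N : ℕ) (N0 : ℝ) (hN0 : 0 < N0)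
    (At Ah : Fin N → Matrix (Fin M) (Fin M) ℂ)
    (hAt : ∀ nn, (At nn).PosSemidef) (hAh : ∀ nn, (Ah nn).PosSemidef)
    (h : ((∑ nn, (At nn - Ah nn)) *
        (((N0 : ℂ) • (1 : Matrix (Fin M) (Fin M) ℂ) + ∑ nn, Ah nn)⁻¹
          - ((N0 : ℂ) • (1 : Matrix (Fin M) (Fin M) ℂ) + ∑ nn, At nn)⁻¹)).trace = 0) :
    ∑ nn, At nn = ∑ nn, Ah nn := by
  set B1 : Matrix (Fin M) (Fin M) ℂ :=
    (N0 : ℂ) • (1 : Matrix (Fin M) (Fin M) ℂ) + ∑ nn, At nn with hB1def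
  set B2 : Matrix (Fin M) (Fin M) ℂ :=
    (N0 : ℂ) • (1 : Matrix (Fin M) (Fin M) ℂ) + ∑ nn, Ah nn with hB2def
  have hsmul : ((N0 : ℂ) • (1 : Matrix (Fin M) (Fin M) ℂ)).PosDef := by
    rw [Matrix.smul_one_eq_diagonal]
    exact Matrix.PosDef.diagonal fun i => by
      simpa using (Complex.zero_lt_real.mpr hN0)
  have hSt : (∑ nn, At nn).PosSemidef :=
    Finset.sum_induction _ _ (fun a b ha hb => ha.add hb)
      (Matrix.PosSemidef.zero) (fun i _ => hAt i)
  have hSh : (∑ nn, Ah nn).PosSemidef :=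
    Finset.sum_induction _ _ (fun a b ha hb => ha.add hb)
      (Matrix.PosSemidef.zero) (fun i _ => hAh i)
  have hB1 : B1.PosDef := hsmul.add_posSemidef hSt
  have hB2 : B2.PosDef := hsmul.add_posSemidef hSh
  set X : Matrix (Fin M) (Fin M) ℂ := ∑ nn, At nn - ∑ nn, Ah nn with hXdef
  have hXB : X = B1 - B2 := by rw [hB1def, hB2def, hXdef]; abel
  have hXH : Xᴴ = X := by
    rw [hXdef, Matrix.conjTranspose_sub, hSt.1, hSh.1]
  have hsum : ∑ nn, (At nn - Ah nn) = X := by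
    rw [hXdef, Finset.sum_sub_distrib]
  -- invertibility facts
  have hB1u : IsUnit B1.det := (Matrix.isUnit_iff_isUnit_det _).mp hB1.isUnit
  have hB2u : IsUnit B2.det := (Matrix.isUnit_iff_isUnit_det _).mp hB2.isUnit
  have key : B2⁻¹ - B1⁻¹ = B2⁻¹ * X * B1⁻¹ := by
    rw [hXB, Matrix.mul_sub, Matrix.sub_mul, Matrix.mul_assoc,
      Matrix.mul_nonsing_inv _ hB1u, Matrix.mul_one,
      Matrix.nonsing_inv_mul _ hB2u, Matrix.one_mul]
  have h' : (X * (B2⁻¹ * X * B1⁻¹)).trace = 0 := by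
    rw [← key, ← hsum]; exact h
  -- sqrt of B1⁻¹
  have hQ : (B1⁻¹).PosDef := hB1.inv
  set R : Matrix (Fin M) (Fin M) ℂ := CFC.sqrt B1⁻¹ with hRdef
  have hRR : R * R = B1⁻¹ := CFC.sqrt_mul_sqrt_self B1⁻¹ (Matrix.nonneg_iff_posSemidef.mpr hQ.posSemidef)
  have hRH : Rᴴ = R := (Matrix.nonneg_iff_posSemidef.mp (CFC.sqrt_nonneg B1⁻¹)).1
  have htr : ((X * R)ᴴ * B2⁻¹ * (X * R)).trace = 0 := by
    have : (X * R)ᴴ * B2⁻¹ * (X * R) = R * (X * (B2⁻¹ * X * R)) := by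
      rw [Matrix.conjTranspose_mul, hRH, hXH]
      simp [Matrix.mul_assoc]
    rw [this, Matrix.trace_mul_comm]
    have : X * (B2⁻¹ * X * R) * R = X * (B2⁻¹ * X * B1⁻¹) := by
      rw [← hRR]; simp [Matrix.mul_assoc]
    rw [this, h']
  have hpsd : ((X * R)ᴴ * B2⁻¹ * (X * R)).PosSemidef :=
    hB2.inv.posSemidef.conjTranspose_mul_mul_same (X * R)
  have hzero : (X * R)ᴴ * B2⁻¹ * (X * R) = 0 := aux_psd_trace_zero hpsd htr
  -- deduce X * R = 0
  set S : Matrix (Fin M) (Fin M) ℂ := CFC.sqrt B2⁻¹ with hSdef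
  have hSS : S * S = B2⁻¹ := CFC.sqrt_mul_sqrt_self B2⁻¹ (Matrix.nonneg_iff_posSemidef.mpr hB2.inv.posSemidef)
  have hSH : Sᴴ = S := (Matrix.nonneg_iff_posSemidef.mp (CFC.sqrt_nonneg B2⁻¹)).1
  have hSY : (S * (X * R))ᴴ * (S * (X * R)) = 0 := by
    have e : (S * (X * R))ᴴ * (S * (X * R)) = (X * R)ᴴ * B2⁻¹ * (X * R) := by
      rw [Matrix.conjTranspose_mul, hSH, ← hSS]
      simp only [Matrix.mul_assoc]
    rw [e, hzero]
  have hSY0 : S * (X * R) = 0 := Matrix.conjTranspose_mul_self_eq_zero.mp hSY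
  have hPY0 : B2⁻¹ * (X * R) = 0 := by
    rw [← hSS, Matrix.mul_assoc, hSY0, Matrix.mul_zero]
  have hXR0 : X * R = 0 := by
    have := congrArg (fun Z => B2 * Z) hPY0
    simpa [← Matrix.mul_assoc, Matrix.mul_nonsing_inv _ hB2u] using this
  have hXQ0 : X * B1⁻¹ = 0 := by
    rw [← hRR, ← Matrix.mul_assoc, hXR0, Matrix.zero_mul]
  have hX0 : X = 0 := by
    have := congrArg (fun Z => Z * B1) hXQ0
    simpa [Matrix.mul_assoc, Matrix.nonsing_inv_mul _ hB1u] using this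
  have := sub_eq_zero.mp (hXdef ▸ hX0)
  exact this
end
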